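/- arXiv:2507.15738 — 8 statements merged into one kernel-verified Lean document; each statement's English description precedes it below -/
import Mathlib

section
/- Let m ≥ 1 and let V be a 2m×2m real symmetric matrix such that V + iΩ is positive semidefinite as a complex Hermitian matrix, where Ω = [[0, I_m], [−I_m, 0]] is the standard symplectic form. Then Tr(V) ≥ 2m. -/
open Matrix ComplexOrder

noncomputable section

/-- The standard symplectic form `Ω = [[0, I_m], [-I_m, 0]]` on `ℝ^(2m)`. -/
def Omega (m : ℕ) : Matrix (Fin m ⊕ Fin m) (Fin m ⊕ Fin m) ℝ :=
  Matrix.fromBlocks 0 1 (-1) 0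

/-- Entrywise complexification of a real matrix. -/
def cplx {m : ℕ} (A : Matrix (Fin m ⊕ Fin m) (Fin m ⊕ Fin m) ℝ) :
    Matrix (Fin m ⊕ Fin m) (Fin m ⊕ Fin m) ℂ :=
  A.map (fun x => (x : ℂ))

lemma quadform_eval {m : ℕ} (M : Matrix (Fin m ⊕ Fin m) (Fin m ⊕ Fin m) ℂ) (j : Fin m) :
    star (Pi.single (Sum.inl j) (1:ℂ) + Pi.single (Sum.inr j) Complex.I)
      ⬝ᵥ (M *ᵥ (Pi.single (Sum.inl j) (1:ℂ) + Pi.single (Sum.inr j) Complex.I))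
    = M (Sum.inl j) (Sum.inl j) + Complex.I * M (Sum.inl j) (Sum.inr j)
      - Complex.I * M (Sum.inr j) (Sum.inl j) + M (Sum.inr j) (Sum.inr j) := by
  simp only [mulVec_add, Matrix.mulVec_single, star_add]
  have h1 : star (Pi.single (Sum.inl j) (1:ℂ) : (Fin m ⊕ Fin m) → ℂ)
      = Pi.single (Sum.inl j) (1:ℂ) := by
    funext k; simp [Pi.single_apply, apply_ite]
  have h2 : star (Pi.single (Sum.inr j) Complex.I : (Fin m ⊕ Fin m) → ℂ)
      = Pi.single (Sum.inr j) (-Complex.I) := by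
    funext k; simp [Pi.single_apply, apply_ite, Complex.conj_I]
  rw [h1, h2]
  simp only [add_dotProduct, dotProduct_add, single_dotProduct]
  ring_nf
  simp [Complex.I_sq]
  linear_combination (-M (Sum.inr j) (Sum.inr j)) * Complex.I_sq

lemma key (m : ℕ) (V : Matrix (Fin m ⊕ Fin m) (Fin m ⊕ Fin m) ℝ) (hsym : V.IsSymm)
    (hpsd : (cplx V + Complex.I • cplx (Omega m)).PosSemidef) (j : Fin m) :
    2 ≤ V (Sum.inl j) (Sum.inl j) + V (Sum.inr j) (Sum.inr j) := by
  set M := cplx V + Complex.I • cplx (Omega m) with hM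
  have h := (posSemidef_iff_dotProduct_mulVec.mp hpsd).2 (Pi.single (Sum.inl j) (1:ℂ) + Pi.single (Sum.inr j) Complex.I)
  rw [quadform_eval] at h
  have hMll : M (Sum.inl j) (Sum.inl j) = (V (Sum.inl j) (Sum.inl j) : ℂ) := by
    simp [hM, cplx, Omega, Matrix.fromBlocks]
  have hMrr : M (Sum.inr j) (Sum.inr j) = (V (Sum.inr j) (Sum.inr j) : ℂ) := by
    simp [hM, cplx, Omega, Matrix.fromBlocks]
  have hMlr : M (Sum.inl j) (Sum.inr j) = (V (Sum.inl j) (Sum.inr j) : ℂ) + Complex.I := by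
    simp [hM, cplx, Omega, Matrix.fromBlocks, Matrix.one_apply]
  have hMrl : M (Sum.inr j) (Sum.inl j) = (V (Sum.inr j) (Sum.inl j) : ℂ) - Complex.I := by
    simp [hM, cplx, Omega, Matrix.fromBlocks, Matrix.one_apply]; ring
  rw [hMll, hMrr, hMlr, hMrl] at h
  have hVs : V (Sum.inl j) (Sum.inr j) = V (Sum.inr j) (Sum.inl j) :=
    (Matrix.IsSymm.apply hsym _ _)
  have hre := (Complex.le_def.mp h).1
  simp [Complex.add_re, Complex.sub_re, Complex.mul_re, hVs] at hre
  linarith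

/-- Any `2m × 2m` real symmetric matrix `V` with `V + iΩ ⪰ 0` (i.e. any covariance matrix
of an `m`-mode continuous-variable quantum state) satisfies `Tr(V) ≥ 2m`. -/
theorem trace_covarianceMatrix_ge_two_mul (m : ℕ) (hm : 1 ≤ m)
    (V : Matrix (Fin m ⊕ Fin m) (Fin m ⊕ Fin m) ℝ) (hsym : V.IsSymm)
    (hpsd : (cplx V + Complex.I • cplx (Omega m)).PosSemidef) :
    (2 * m : ℝ) ≤ V.trace := by
  have ht : V.trace = ∑ j : Fin m, (V (Sum.inl j) (Sum.inl j) + V (Sum.inr j) (Sum.inr j)) := by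
    simp [Matrix.trace, Matrix.diag, Fintype.sum_sum_type, Finset.sum_add_distrib]
  rw [ht]
  calc (2 * m : ℝ) = ∑ _j : Fin m, (2 : ℝ) := by simp [mul_comm]
    _ ≤ _ := Finset.sum_le_sum fun j _ => key m V hsym hpsd j
end
end

section
/- Let m ≥ 1 and let V = [[Vx, Vxp], [Vxpᵀ, Vp]] be a 2m×2m real symmetric matrix (with m×m blocks Vx, Vxp, Vp) that is positive definite and satisfies V + iΩ ⪰ 0 as a complex Hermitian matrix. Then the block-diagonal matrix Ṽ = [[Vx, 0], [0, Vp]] obtained by removing the position-momentum correlation block is also positive definite and satisfies Ṽ + iΩ ⪰ 0; that is, Ṽ is again a valid covariance matrix of an m-mode quantum state. -/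
open Matrix ComplexOrder

noncomputable section

lemma psd_smul_aux {n : Type*} [Fintype n] {M : Matrix n n ℂ} (h : M.PosSemidef)
    {c : ℝ} (hc : 0 ≤ c) : ((c : ℂ) • M).PosSemidef := by
  constructor
  · unfold Matrix.IsHermitian
    rw [conjTranspose_smul, h.1.eq]
    congr 1
    simp [Complex.ext_iff]
  · intro x
    exact (h.smul (by exact_mod_cast Complex.zero_le_real.mpr hc : (0:ℂ) ≤ (c:ℂ))).2 x

lemma pd_smul_aux {n : Type*} [Fintype n] {M : Matrix n n ℝ} (h : M.PosDef)
    {c : ℝ} (hc : 0 < c) : (c • M).PosDef := by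
  constructor
  · unfold Matrix.IsHermitian
    rw [conjTranspose_smul, h.1.eq]
    simp
  · intro x hx
    exact (h.smul hc).2 hx

/-- If `V = [[Vx, Vxp], [Vxpᵀ, Vp]]` is a covariance matrix of an `m`-mode quantum state
(real symmetric, positive definite, `V + iΩ ⪰ 0`), then the block-diagonal matrix
`Ṽ = [[Vx, 0], [0, Vp]]` obtained by removing the position-momentum correlation block is
again a valid covariance matrix: it is positive definite and satisfies `Ṽ + iΩ ⪰ 0`. -/
theorem removing_pm_correlations_is_covarianceMatrix (m : ℕ) (hm : 1 ≤ m)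
    (Vx Vxp Vp : Matrix (Fin m) (Fin m) ℝ)
    (hsym : (fromBlocks Vx Vxp Vxpᵀ Vp).IsSymm)
    (hpd : (fromBlocks Vx Vxp Vxpᵀ Vp).PosDef)
    (hpsd : (cplx (fromBlocks Vx Vxp Vxpᵀ Vp) + Complex.I • cplx (Omega m)).PosSemidef) :
    (fromBlocks Vx 0 0 Vp).PosDef ∧
      (cplx (fromBlocks Vx 0 0 Vp) + Complex.I • cplx (Omega m)).PosSemidef := by
  have hsym' := hsym
  rw [Matrix.IsSymm, fromBlocks_transpose] at hsym'
  have hVx : Vxᵀ = Vx := by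
    have := congrArg Matrix.toBlocks₁₁ hsym'
    simpa [Matrix.toBlocks_fromBlocks₁₁] using this
  have hVp : Vpᵀ = Vp := by
    have := congrArg Matrix.toBlocks₂₂ hsym'
    simpa [Matrix.toBlocks_fromBlocks₂₂] using this
  set S : Matrix (Fin m ⊕ Fin m) (Fin m ⊕ Fin m) ℝ := fromBlocks 1 0 0 (-1) with hS
  set Sc : Matrix (Fin m ⊕ Fin m) (Fin m ⊕ Fin m) ℂ := fromBlocks 1 0 0 (-1) with hSc
  constructor
  · -- real identity: Ṽ = 2⁻¹ • (V + S V Sᴴ)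
    have idR : ((2:ℝ)⁻¹) • (fromBlocks Vx Vxp Vxpᵀ Vp
        + S * fromBlocks Vx Vxp Vxpᵀ Vp * Sᴴ) = fromBlocks Vx 0 0 Vp := by
      have hSH : Sᴴ = S := by
        ext (i | i) (j | j) <;>
          simp [hS, conjTranspose_apply, Matrix.one_apply, apply_ite, eq_comm]
      rw [hSH, hS]
      simp [fromBlocks_multiply, fromBlocks_add, fromBlocks_smul]
      constructor <;> module
    have h1 : (S * fromBlocks Vx Vxp Vxpᵀ Vp * Sᴴ).PosSemidef :=
      hpd.posSemidef.mul_mul_conjTranspose_same S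
    have h2 := hpd.add_posSemidef h1
    rw [← idR]
    exact pd_smul_aux h2 (by norm_num)
  · -- complex part
    set W : Matrix (Fin m ⊕ Fin m) (Fin m ⊕ Fin m) ℂ :=
      cplx (fromBlocks Vx Vxp Vxpᵀ Vp) + Complex.I • cplx (Omega m) with hW
    have hWt : Wᵀ.PosSemidef := hpsd.transpose
    have h1 : (Sc * Wᵀ * Scᴴ).PosSemidef := hWt.mul_mul_conjTranspose_same Sc
    have h2 := hpsd.add h1
    have m0 : Matrix.map (0 : Matrix (Fin m) (Fin m) ℝ) (fun x : ℝ => (x : ℂ)) = 0 :=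
      Matrix.map_zero _ Complex.ofReal_zero
    have m1 : Matrix.map (1 : Matrix (Fin m) (Fin m) ℝ) (fun x : ℝ => (x : ℂ)) = 1 := by
      ext i j; simp [Matrix.one_apply, apply_ite]
    have mneg : Matrix.map (-1 : Matrix (Fin m) (Fin m) ℝ) (fun x : ℝ => (x : ℂ)) = -1 := by
      ext i j; simp [Matrix.one_apply, apply_ite]
    have t1 : (Vx.map (fun x : ℝ => (x : ℂ)))ᵀ = Vx.map (fun x : ℝ => (x : ℂ)) := by rw [← Matrix.transpose_map, hVx]
    have t2 : (Vp.map (fun x : ℝ => (x : ℂ)))ᵀ = Vp.map (fun x : ℝ => (x : ℂ)) := by rw [← Matrix.transpose_map, hVp]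
    have t3 : ((Vxpᵀ).map (fun x : ℝ => (x : ℂ)))ᵀ = Vxp.map (fun x : ℝ => (x : ℂ)) := by
      rw [← Matrix.transpose_map, transpose_transpose]
    have t4 : (Vxp.map (fun x : ℝ => (x : ℂ)))ᵀ = (Vxpᵀ).map (fun x : ℝ => (x : ℂ)) :=
      Matrix.transpose_map.symm
    have idC : ((2:ℝ) : ℂ)⁻¹ • (W + Sc * Wᵀ * Scᴴ)
        = cplx (fromBlocks Vx 0 0 Vp) + Complex.I • cplx (Omega m) := by
      have hScH : Scᴴ = Sc := by
        ext (i | i) (j | j) <;>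
          simp [hSc, conjTranspose_apply, Matrix.one_apply, apply_ite, eq_comm]
      rw [hScH, hW, hSc]
      simp only [cplx, Omega, fromBlocks_map, fromBlocks_smul, fromBlocks_add,
        fromBlocks_transpose, fromBlocks_multiply, transpose_add, transpose_smul,
        m0, m1, mneg, t1, t2, t3, t4, transpose_zero, transpose_one, transpose_neg,
        one_mul, mul_one, zero_mul, mul_zero, add_zero, zero_add, smul_zero,
        neg_mul, mul_neg, neg_neg, neg_zero]
      rw [fromBlocks_inj]
      refine ⟨?_, ?_, ?_, ?_⟩ <;> module
    rw [← idC]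
    have h3 : (((2:ℝ) : ℂ)⁻¹) = (((2:ℝ)⁻¹ : ℝ) : ℂ) := by push_cast; ring
    rw [h3]
    exact psd_smul_aux h2 (by norm_num)
end
end

section
/- Let m ≥ 1 and let V = [[Vx, Vxp], [Vxpᵀ, Vp]] be a 2m×2m real symmetric positive definite matrix with V + iΩ ⪰ 0 as a complex Hermitian matrix. Then the minimum of (1/2)‖V − W‖_F² over all 2m×2m real symmetric positive definite matrices W satisfying W + iΩ ⪰ 0 and having zero off-diagonal block (W_{xp} = 0) exists and equals ‖Vxp‖_F². In other words, the symplectic coherence c(V) = ‖Vxp‖_F² equals half the minimal squared Hilbert–Schmidt distance from V to the set of covariance matrices of free states (states without position-momentum correlations). -/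
open Matrix ComplexOrder

noncomputable section

/-- The squared Frobenius norm `‖A‖_F² = Σ_{i,j} A_{ij}²` of a real matrix. -/
def frobSq {n k : Type*} [Fintype n] [Fintype k] (A : Matrix n k ℝ) : ℝ :=
  ∑ i, ∑ j, (A i j) ^ 2

lemma frobSq_nonneg {n k : Type*} [Fintype n] [Fintype k] (A : Matrix n k ℝ) : 0 ≤ frobSq A :=
  Finset.sum_nonneg fun _ _ => Finset.sum_nonneg fun _ _ => sq_nonneg _

lemma frobSq_transpose {n k : Type*} [Fintype n] [Fintype k] (A : Matrix n k ℝ) :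
    frobSq Aᵀ = frobSq A := by
  rw [frobSq, frobSq, Finset.sum_comm]
  simp [transpose_apply]

@[simp] lemma frobSq_zero {n k : Type*} [Fintype n] [Fintype k] :
    frobSq (0 : Matrix n k ℝ) = 0 := by simp [frobSq]

lemma frobSq_fromBlocks {n l o p : Type*} [Fintype n] [Fintype l] [Fintype o] [Fintype p]
    (A : Matrix n l ℝ) (B : Matrix n p ℝ) (C : Matrix o l ℝ) (D : Matrix o p ℝ) :
    frobSq (fromBlocks A B C D) = frobSq A + frobSq B + frobSq C + frobSq D := by
  simp only [frobSq, Fintype.sum_sum_type]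
  simp [fromBlocks, Finset.sum_add_distrib]
  ring

lemma psd_smul {n : Type*} [Fintype n] {M : Matrix n n ℂ} (hM : M.PosSemidef) {c : ℂ}
    (hc : 0 ≤ c) : (c • M).PosSemidef := by
  have him : c.im = 0 := ((Complex.le_def.mp hc).2).symm
  rw [posSemidef_iff_dotProduct_mulVec] at hM ⊢
  constructor
  · unfold Matrix.IsHermitian
    rw [conjTranspose_smul, hM.1.eq, Complex.star_def, Complex.conj_eq_iff_im.mpr him]
  · intro x
    rw [smul_mulVec, dotProduct_smul, smul_eq_mul]
    exact mul_nonneg hc (hM.2 x)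

lemma pd_smul {n : Type*} [Fintype n] {M : Matrix n n ℝ} (hM : M.PosDef) {c : ℝ}
    (hc : 0 < c) : (c • M).PosDef := by
  rw [posDef_iff_dotProduct_mulVec] at hM ⊢
  constructor
  · unfold Matrix.IsHermitian
    rw [conjTranspose_smul, hM.1.eq]; norm_num
  · intro x hx
    rw [smul_mulVec, dotProduct_smul, smul_eq_mul]
    exact mul_pos hc (hM.2 hx)

lemma pd_conj {n : Type*} [Fintype n] [DecidableEq n] {M A : Matrix n n ℝ} (hM : M.PosDef)
    (hA : A * A = 1) (hAs : Aᵀ = A) : (A * M * A).PosDef := by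
  rw [posDef_iff_dotProduct_mulVec] at hM ⊢
  constructor
  · have hMs : Mᵀ = M := by simpa using hM.1.eq
    unfold Matrix.IsHermitian
    simp only [conjTranspose_eq_transpose_of_trivial, transpose_mul, hAs, hMs]
    rw [Matrix.mul_assoc]
  · intro x hx
    have hAx : A *ᵥ x ≠ 0 := by
      intro h
      apply hx
      have := congrArg (A *ᵥ ·) h
      simpa [mulVec_mulVec, hA] using this
    have := hM.2 hAx
    convert this using 1
    rw [star_trivial, star_trivial, ← mulVec_mulVec, ← mulVec_mulVec, dotProduct_mulVec]
    nth_rewrite 1 [← hAs]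
    rw [vecMul_transpose]

lemma halfAddC {n : Type*} [Fintype n] (A : Matrix n n ℂ) :
    (1/2 : ℂ) • (A + A) = A := by
  rw [← two_smul ℂ, smul_smul]; norm_num

lemma halfAddR {n : Type*} [Fintype n] (A : Matrix n n ℝ) :
    (1/2 : ℝ) • (A + A) = A := by
  rw [← two_smul ℝ, smul_smul]; norm_num

/-- Operational interpretation of symplectic coherence: for a covariance matrix
`V = [[Vx, Vxp], [Vxpᵀ, Vp]]` (real symmetric, positive definite, `V + iΩ ⪰ 0`), the
symplectic coherence `c(V) = ‖Vxp‖_F²` equals the minimum of `(1/2)‖V − W‖_F²` over all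
covariance matrices `W` of free states, i.e. real symmetric positive definite `W` with
`W + iΩ ⪰ 0` and vanishing position-momentum block `W_{xp} = 0`; moreover the minimum
is attained. -/
theorem symplecticCoherence_eq_min_dist_to_free (m : ℕ) (hm : 1 ≤ m)
    (Vx Vxp Vp : Matrix (Fin m) (Fin m) ℝ)
    (hsym : (fromBlocks Vx Vxp Vxpᵀ Vp).IsSymm)
    (hpd : (fromBlocks Vx Vxp Vxpᵀ Vp).PosDef)
    (hpsd : (cplx (fromBlocks Vx Vxp Vxpᵀ Vp) + Complex.I • cplx (Omega m)).PosSemidef) :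
    IsLeast {dist2 : ℝ | ∃ W : Matrix (Fin m ⊕ Fin m) (Fin m ⊕ Fin m) ℝ,
        W.IsSymm ∧ W.PosDef ∧
        (cplx W + Complex.I • cplx (Omega m)).PosSemidef ∧
        W.toBlocks₁₂ = 0 ∧
        dist2 = (1 / 2) * frobSq (fromBlocks Vx Vxp Vxpᵀ Vp - W)}
      (frobSq Vxp) := by
  set V : Matrix (Fin m ⊕ Fin m) (Fin m ⊕ Fin m) ℝ := fromBlocks Vx Vxp Vxpᵀ Vp with hV
  -- symmetry of blocks
  have hVx : Vxᵀ = Vx := by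
    have := congrArg Matrix.toBlocks₁₁ hsym
    simpa [Matrix.IsSymm, hV, fromBlocks_transpose, toBlocks_fromBlocks₁₁] using this
  have hVp : Vpᵀ = Vp := by
    have := congrArg Matrix.toBlocks₂₂ hsym
    simpa [Matrix.IsSymm, hV, fromBlocks_transpose, toBlocks_fromBlocks₂₂] using this
  constructor
  · -- membership
    refine ⟨fromBlocks Vx 0 0 Vp, ?_, ?_, ?_, ?_, ?_⟩
    · unfold Matrix.IsSymm
      rw [fromBlocks_transpose, hVx, hVp]
      simp
    · -- PosDef
      set Jr : Matrix (Fin m ⊕ Fin m) (Fin m ⊕ Fin m) ℝ := fromBlocks 1 0 0 (-1) with hJr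
      have hJr2 : Jr * Jr = 1 := by
        rw [hJr, fromBlocks_multiply]
        simp [← fromBlocks_one]
      have hJrT : Jrᵀ = Jr := by
        rw [hJr, fromBlocks_transpose]
        simp
      have hconj : Jr * V * Jr = fromBlocks Vx (-Vxp) (-Vxpᵀ) Vp := by
        rw [hJr, hV, fromBlocks_multiply, fromBlocks_multiply]
        simp
      have hWid : fromBlocks Vx 0 0 Vp = (1/2 : ℝ) • (V + Jr * V * Jr) := by
        rw [hconj, hV, fromBlocks_add, fromBlocks_smul]
        rw [fromBlocks_inj]
        refine ⟨(halfAddR Vx).symm, by simp, by simp, (halfAddR Vp).symm⟩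
      rw [hWid]
      exact pd_smul (hpd.add (pd_conj hpd hJr2 hJrT)) (by norm_num)
    · -- PosSemidef of the free covariance matrix + iΩ
      have hΩ : cplx (Omega m) = fromBlocks 0 1 (-1) 0 := by
        unfold cplx Omega
        rw [fromBlocks_map, fromBlocks_inj]
        refine ⟨by ext i j; simp, by ext i j; simp [Matrix.one_apply, apply_ite], ?_, by ext i j; simp⟩
        ext i j
        simp [Matrix.one_apply, apply_ite]
      have hΩT : (cplx (Omega m))ᵀ = -(cplx (Omega m)) := by
        rw [hΩ, fromBlocks_transpose, fromBlocks_neg, fromBlocks_inj]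
        refine ⟨by simp, by simp, by simp, by simp⟩
      have hVT : (cplx V)ᵀ = cplx V := by
        unfold cplx
        rw [← Matrix.transpose_map, hsym]
      have hXT : (cplx V + Complex.I • cplx (Omega m))ᵀ
          = cplx V - Complex.I • cplx (Omega m) := by
        rw [transpose_add, transpose_smul, hVT, hΩT, smul_neg, ← sub_eq_add_neg]
      set a := Vx.map (fun x : ℝ => (x : ℂ)) with ha
      set b := Vxp.map (fun x : ℝ => (x : ℂ)) with hb
      set bt := Vxpᵀ.map (fun x : ℝ => (x : ℂ)) with hbt
      set d := Vp.map (fun x : ℝ => (x : ℂ)) with hd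
      have hcV : cplx V = fromBlocks a b bt d := by
        rw [hV]; unfold cplx; rw [fromBlocks_map]
      have hX : cplx V + Complex.I • cplx (Omega m)
          = fromBlocks a (b + Complex.I • 1) (bt - Complex.I • 1) d := by
        rw [hcV, hΩ, fromBlocks_smul, fromBlocks_add, fromBlocks_inj]
        refine ⟨by simp, by simp, ?_, by simp⟩
        rw [smul_neg, ← sub_eq_add_neg]
      have hXm : cplx V - Complex.I • cplx (Omega m)
          = fromBlocks a (b - Complex.I • 1) (bt + Complex.I • 1) d := by
        rw [hcV, hΩ, fromBlocks_smul, sub_eq_add_neg, fromBlocks_neg, fromBlocks_add,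
          fromBlocks_inj]
        refine ⟨by simp, (sub_eq_add_neg b _).symm, by simp [smul_neg], by simp⟩
      have hcW : cplx (fromBlocks Vx 0 0 Vp) = fromBlocks a 0 0 d := by
        unfold cplx
        rw [fromBlocks_map, fromBlocks_inj]
        exact ⟨rfl, by ext i j; simp, by ext i j; simp, rfl⟩
      have hW0 : cplx (fromBlocks Vx 0 0 Vp) + Complex.I • cplx (Omega m)
          = fromBlocks a (Complex.I • 1) (-(Complex.I • 1)) d := by
        rw [hcW, hΩ, fromBlocks_smul, fromBlocks_add, fromBlocks_inj]
        refine ⟨by simp, by simp, by simp [smul_neg], by simp⟩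
      set Jc : Matrix (Fin m ⊕ Fin m) (Fin m ⊕ Fin m) ℂ := fromBlocks 1 0 0 (-1) with hJc
      have hJcH : Jcᴴ = Jc := by
        rw [hJc, fromBlocks_conjTranspose, fromBlocks_inj]
        refine ⟨by simp, by simp, by simp, by simp⟩
      have hconjJc : ∀ (A B C D : Matrix (Fin m) (Fin m) ℂ),
          Jc * fromBlocks A B C D * Jc = fromBlocks A (-B) (-C) D := by
        intro A B C D
        rw [hJc, fromBlocks_multiply, fromBlocks_multiply, fromBlocks_inj]
        refine ⟨by simp, by simp, by simp, by simp⟩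
      have hkey : cplx (fromBlocks Vx 0 0 Vp) + Complex.I • cplx (Omega m)
          = (1/2 : ℂ) • ((cplx V + Complex.I • cplx (Omega m))
              + Jc * (cplx V + Complex.I • cplx (Omega m))ᵀ * Jcᴴ) := by
        rw [hW0, hXT, hJcH, hX, hXm, hconjJc, fromBlocks_add, fromBlocks_smul, fromBlocks_inj]
        refine ⟨(halfAddC a).symm, ?_, ?_, (halfAddC d).symm⟩
        · have h : (b + Complex.I • 1) + -(b - Complex.I • 1)
              = (Complex.I • (1 : Matrix (Fin m) (Fin m) ℂ)) + Complex.I • 1 := by abel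
          rw [h, halfAddC]
        · have h : (bt - Complex.I • 1) + -(bt + Complex.I • 1)
              = (-(Complex.I • (1 : Matrix (Fin m) (Fin m) ℂ))) + -(Complex.I • 1) := by abel
          rw [h, halfAddC]
      rw [hkey]
      have hhalf : (0:ℂ) ≤ (1/2 : ℂ) := by
        have h2 : ((1/2:ℝ):ℂ) = (1/2:ℂ) := by norm_num
        rw [← h2]
        exact_mod_cast (by norm_num : (0:ℝ) ≤ 1/2)
      exact psd_smul (hpsd.add (hpsd.transpose.mul_mul_conjTranspose_same Jc)) hhalf
    · simp [toBlocks_fromBlocks₁₂]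
    · have hsub : V - fromBlocks Vx 0 0 Vp = fromBlocks 0 Vxp Vxpᵀ 0 := by
        rw [hV, sub_eq_add_neg, fromBlocks_neg, fromBlocks_add]
        simp
      rw [hsub, frobSq_fromBlocks, frobSq_transpose, frobSq_zero]
      ring
  · -- lower bound
    rintro d ⟨W, hWs, hWpd, hWpsd, hW12, rfl⟩
    have hW21 : W.toBlocks₂₁ = 0 := by
      ext i j
      have h1 : W (Sum.inl j) (Sum.inr i) = 0 := by
        have := congrFun (congrFun hW12 j) i
        simpa [Matrix.toBlocks₁₂] using this
      have h2 := congrFun (congrFun hWs (Sum.inl j)) (Sum.inr i)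
      simp only [Matrix.transpose_apply] at h2
      simp only [Matrix.toBlocks₂₁, Matrix.of_apply, Matrix.zero_apply]
      rw [h2, h1]
    have hWblocks : W = fromBlocks W.toBlocks₁₁ 0 0 W.toBlocks₂₂ := by
      conv_lhs => rw [← fromBlocks_toBlocks W]
      rw [hW12, hW21]
    have hsub : V - W = fromBlocks (Vx - W.toBlocks₁₁) Vxp Vxpᵀ (Vp - W.toBlocks₂₂) := by
      rw [hV]
      nth_rewrite 1 [hWblocks]
      rw [sub_eq_add_neg, fromBlocks_neg, fromBlocks_add]
      simp [sub_eq_add_neg]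
    rw [hsub, frobSq_fromBlocks, frobSq_transpose]
    have h1 := frobSq_nonneg (Vx - W.toBlocks₁₁)
    have h2 := frobSq_nonneg (Vp - W.toBlocks₂₂)
    linarith
end
end

section
/- Let m ≥ 1 and let V = [[Vx, Vxp], [Vxpᵀ, Vp]] be a 2m×2m real symmetric matrix with V + iΩ ⪰ 0 as a complex Hermitian matrix, and set E = Tr(V). Then the symplectic coherence of V is bounded as ‖Vxp‖_F² ≤ (E − 2m)²/4 + (E − 2m). -/
open Matrix ComplexOrder

noncomputable section

/-- Entrywise complexification (auxiliary, for blocks of any shape). -/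
def cm {n k : Type*} (A : Matrix n k ℝ) : Matrix n k ℂ := A.map (fun x => (x : ℂ))

lemma cm_mul {n k l : Type*} [Fintype k] (A : Matrix n k ℝ) (B : Matrix k l ℝ) :
    cm (A * B) = cm A * cm B := by
  ext i j; simp [cm, Matrix.mul_apply]

lemma cm_conjTranspose {n k : Type*} (A : Matrix n k ℝ) : (cm A)ᴴ = cm Aᵀ := by
  ext i j; simp [cm, Matrix.conjTranspose_apply]

lemma cm_trace {n : Type*} [Fintype n] (A : Matrix n n ℝ) :
    (cm A).trace = (A.trace : ℂ) := by
  simp [cm, Matrix.trace, Matrix.diag]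

lemma trace_fromBlocks {α : Type*} [AddCommMonoid α] {n p : Type*} [Fintype n] [Fintype p]
    (A : Matrix n n α) (B : Matrix n p α) (C : Matrix p n α) (D : Matrix p p α) :
    (Matrix.fromBlocks A B C D).trace = A.trace + D.trace := by
  simp [Matrix.trace, Fintype.sum_sum_type, Matrix.diag]

lemma key_ineq {m : ℕ} (V : Matrix (Fin m ⊕ Fin m) (Fin m ⊕ Fin m) ℝ) (hsym : V.IsSymm)
    (hpsd : (cplx V + Complex.I • cplx (Omega m)).PosSemidef)
    (R S : Matrix (Fin m) (Fin m) ℝ) :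
    0 ≤ (Rᵀ * V.toBlocks₁₁ * R).trace + (Sᵀ * V.toBlocks₁₁ * S).trace
      - 2 * (Rᵀ * V.toBlocks₁₂).trace - 2 * S.trace + V.toBlocks₂₂.trace := by
  set A := V.toBlocks₁₁ with hA
  set C := V.toBlocks₁₂ with hC
  set B := V.toBlocks₂₂ with hB
  set M := cplx V + Complex.I • cplx (Omega m) with hM
  have hblock : M = Matrix.fromBlocks (cm A) (cm C + Complex.I • 1)
      (cm Cᵀ - Complex.I • 1) (cm B) := by
    have h21 : V.toBlocks₂₁ = V.toBlocks₁₂ᵀ := by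
      ext i j; exact hsym.apply _ _
    have hV : cplx V = Matrix.fromBlocks (cm A) (cm C) (cm Cᵀ) (cm B) := by
      conv_lhs => rw [cplx, ← Matrix.fromBlocks_toBlocks V, h21]
      rw [Matrix.fromBlocks_map]; rfl
    have hO : cplx (Omega m) = Matrix.fromBlocks 0 1 (-1) 0 := by
      ext (i|i) (j|j) <;>
        simp [Omega, cplx, Matrix.map_apply, Matrix.one_apply, apply_ite]
    rw [hM, hV, hO, Matrix.fromBlocks_smul, Matrix.fromBlocks_add]
    congr 1 <;> simp [sub_eq_add_neg]
  set W : Matrix (Fin m) (Fin m) ℂ := cm R + Complex.I • cm S with hW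
  set T : Matrix (Fin m ⊕ Fin m) (Fin m ⊕ Fin m) ℂ := Matrix.fromBlocks (-W) 0 1 0 with hT
  have hN : (Tᴴ * M * T).PosSemidef := hpsd.conjTranspose_mul_mul_same T
  have htr : 0 ≤ (Tᴴ * M * T).trace := by
    rw [Matrix.trace]
    apply Finset.sum_nonneg
    intro z _
    have h := hN.dotProduct_mulVec_nonneg (Pi.single z 1)
    simpa [dotProduct, Pi.single_apply, apply_ite, ite_mul, mul_ite,
      star_apply] using h
  -- compute the trace
  have hTH : Tᴴ = Matrix.fromBlocks (-Wᴴ) 1 0 0 := by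
    rw [hT, Matrix.fromBlocks_conjTranspose]; simp
  have htrace_eq : (Tᴴ * M * T).trace =
      (Wᴴ * cm A * W).trace - (Wᴴ * (cm C + Complex.I • 1)).trace
        - ((cm Cᵀ - Complex.I • 1) * W).trace + (cm B).trace := by
    rw [hTH, hblock, hT, Matrix.fromBlocks_multiply, Matrix.fromBlocks_multiply,
      trace_fromBlocks]
    simp only [Matrix.mul_zero, Matrix.zero_mul, Matrix.mul_one, Matrix.one_mul,
      Matrix.add_mul, Matrix.mul_add, Matrix.neg_mul, Matrix.mul_neg, neg_neg,
      add_zero, zero_add, Matrix.trace_add, Matrix.trace_neg, Matrix.trace_zero]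
    ring
  -- real part of each piece
  have hre : ((Tᴴ * M * T).trace).re =
      (Rᵀ * A * R).trace + (Sᵀ * A * S).trace
        - 2 * (Rᵀ * C).trace - 2 * S.trace + B.trace := by
    have hWH : Wᴴ = cm Rᵀ - Complex.I • cm Sᵀ := by
      rw [hW, Matrix.conjTranspose_add, Matrix.conjTranspose_smul,
        cm_conjTranspose, cm_conjTranspose]
      simp [Complex.star_def, sub_eq_add_neg, neg_smul]
    rw [htrace_eq, hWH, hW]
    simp only [Matrix.sub_mul, Matrix.mul_sub, Matrix.add_mul, Matrix.mul_add,
      Matrix.smul_mul, Matrix.mul_smul, smul_smul, Matrix.mul_one, Matrix.one_mul,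
      Matrix.trace_add, Matrix.trace_sub, Matrix.trace_smul, ← cm_mul, cm_trace,
      smul_eq_mul]
    have e1 : (Cᵀ * R).trace = (Rᵀ * C).trace := by
      rw [← Matrix.trace_transpose, Matrix.transpose_mul, Matrix.transpose_transpose]
    have e2 : Sᵀ.trace = S.trace := Matrix.trace_transpose S
    simp only [Complex.sub_re, Complex.add_re, Complex.mul_re, Complex.I_re, Complex.I_im,
      Complex.ofReal_re, Complex.ofReal_im, Complex.sub_im, Complex.add_im, Complex.mul_im,
      e1, e2]
    ring
  rw [← hre]
  exact (Complex.le_def.mp htr).1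

-- spectral machinery lemma: existence of S0
lemma exists_S0 {m : ℕ} (C : Matrix (Fin m) (Fin m) ℝ) :
    ∃ (S0 : Matrix (Fin m) (Fin m) ℝ) (μ : Fin m → ℝ),
      (∀ i, 1 ≤ μ i) ∧ S0ᵀ = S0 ∧
      S0 * (C * Cᵀ + 1) * S0 = 1 ∧
      (S0 * (C * Cᵀ + 1)).trace = ∑ i, Real.sqrt (μ i) ∧
      (C * Cᵀ + 1).trace = ∑ i, μ i := by
  set K : Matrix (Fin m) (Fin m) ℝ := C * Cᵀ + 1 with hKdef
  have hCpsd : (C * Cᵀ).PosSemidef := by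
    have := Matrix.posSemidef_self_mul_conjTranspose C
    rwa [Matrix.conjTranspose_eq_transpose_of_trivial] at this
  have hKpsd : K.PosSemidef := hCpsd.add Matrix.PosSemidef.one
  have hK : K.IsHermitian := hKpsd.isHermitian
  set μ := hK.eigenvalues with hμ
  set U : Matrix (Fin m) (Fin m) ℝ := (hK.eigenvectorUnitary : Matrix (Fin m) (Fin m) ℝ)
    with hU
  have hUU : U * Uᵀ = 1 := by
    have := (Matrix.mem_unitaryGroup_iff).mp (hK.eigenvectorUnitary).2
    rwa [Matrix.star_eq_conjTranspose, Matrix.conjTranspose_eq_transpose_of_trivial] at this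
  have hUU' : Uᵀ * U = 1 := by
    have := (Matrix.mem_unitaryGroup_iff').mp (hK.eigenvectorUnitary).2
    rwa [Matrix.star_eq_conjTranspose, Matrix.conjTranspose_eq_transpose_of_trivial] at this
  have hspec : K = U * Matrix.diagonal μ * Uᵀ := by
    have := hK.spectral_theorem
    rwa [Unitary.conjStarAlgAut_apply, Matrix.star_eq_conjTranspose, Matrix.conjTranspose_eq_transpose_of_trivial,
      RCLike.ofReal_real_eq_id, Function.id_comp] at this
  -- eigenvalues ≥ 1
  have hmu : ∀ i, 1 ≤ μ i := by
    intro i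
    set v : Fin m → ℝ := ⇑(hK.eigenvectorBasis i) with hv
    have hKv : K *ᵥ v = μ i • v := hK.mulVec_eigenvectorBasis i
    have hvv : v ⬝ᵥ v = 1 := by
      have h1 := hK.eigenvectorBasis.orthonormal.1 i
      have h2 : @inner ℝ _ _ (hK.eigenvectorBasis i) (hK.eigenvectorBasis i) = 1 := by
        rw [real_inner_self_eq_norm_sq, h1]; norm_num
      rw [← h2, PiLp.inner_apply]
      simp only [RCLike.inner_apply, starRingEnd_apply, star_trivial]
      rfl
    have hq : v ⬝ᵥ (K *ᵥ v) = μ i := by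
      rw [hKv, dotProduct_smul, hvv]; simp
    have hq2 : v ⬝ᵥ (K *ᵥ v) = (Cᵀ *ᵥ v) ⬝ᵥ (Cᵀ *ᵥ v) + 1 := by
      rw [hKdef, Matrix.add_mulVec, dotProduct_add, Matrix.one_mulVec, hvv]
      congr 1
      rw [← Matrix.mulVec_mulVec, dotProduct_mulVec]
      congr 1
      rw [← Matrix.transpose_transpose C, Matrix.vecMul_transpose, Matrix.transpose_transpose]
    have hnn : 0 ≤ (Cᵀ *ᵥ v) ⬝ᵥ (Cᵀ *ᵥ v) := by
      apply Finset.sum_nonneg; intro j _; exact mul_self_nonneg _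
    rw [hq2] at hq; linarith
  have hmupos : ∀ i, (0:ℝ) < μ i := fun i => lt_of_lt_of_le one_pos (hmu i)
  have hcancel : ∀ X : Matrix (Fin m) (Fin m) ℝ, Uᵀ * (U * X) = X := by
    intro X; rw [← Matrix.mul_assoc, hUU', Matrix.one_mul]
  have hconj : ∀ X Y : Matrix (Fin m) (Fin m) ℝ,
      (U * X * Uᵀ) * (U * Y * Uᵀ) = U * (X * Y) * Uᵀ := by
    intro X Y; simp only [Matrix.mul_assoc, hcancel]
  have h0 : ∀ i, Real.sqrt (μ i) ≠ 0 := fun i =>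
    ne_of_gt (Real.sqrt_pos.mpr (hmupos i))
  have h1 : ∀ i, Real.sqrt (μ i) * Real.sqrt (μ i) = μ i := fun i =>
    Real.mul_self_sqrt (hmupos i).le
  have hdiag2 : ∀ i, (Real.sqrt (μ i))⁻¹ * μ i = Real.sqrt (μ i) := by
    intro i; rw [inv_mul_eq_iff_eq_mul₀ (h0 i)]; exact (h1 i).symm
  have hdiag1 : ∀ i, (Real.sqrt (μ i))⁻¹ * μ i * (Real.sqrt (μ i))⁻¹ = 1 := by
    intro i; rw [hdiag2, mul_inv_cancel₀ (h0 i)]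
  refine ⟨U * Matrix.diagonal (fun i => (Real.sqrt (μ i))⁻¹) * Uᵀ, μ, hmu, ?_, ?_, ?_, ?_⟩
  · simp [Matrix.transpose_mul, Matrix.diagonal_transpose, Matrix.mul_assoc]
  · rw [hspec, hconj, hconj, Matrix.diagonal_mul_diagonal, Matrix.diagonal_mul_diagonal]
    have : (fun i => (Real.sqrt (μ i))⁻¹ * μ i * (Real.sqrt (μ i))⁻¹) = fun _ => (1:ℝ) := by
      funext i; exact hdiag1 i
    rw [this, Matrix.diagonal_one, Matrix.mul_one, hUU]
  · rw [hspec, hconj, Matrix.diagonal_mul_diagonal, Matrix.trace_mul_cycle,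
      hUU', Matrix.one_mul, Matrix.trace_diagonal]
    exact Finset.sum_congr rfl fun i _ => hdiag2 i
  · rw [hspec, Matrix.trace_mul_cycle, hUU', Matrix.one_mul, Matrix.trace_diagonal]

/-- Maximal symplectic coherence: for any covariance matrix `V` of an `m`-mode state
(real symmetric, `V + iΩ ⪰ 0`) with energy `E = Tr(V)`, the symplectic coherence
`‖Vxp‖_F²` of its position-momentum block `Vxp = V.toBlocks₁₂` satisfies
`‖Vxp‖_F² ≤ (E − 2m)²/4 + (E − 2m)`. -/
theorem symplecticCoherence_le_max (m : ℕ) (hm : 1 ≤ m)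
    (V : Matrix (Fin m ⊕ Fin m) (Fin m ⊕ Fin m) ℝ) (hsym : V.IsSymm)
    (hpsd : (cplx V + Complex.I • cplx (Omega m)).PosSemidef)
    (E : ℝ) (hE : E = V.trace) :
    frobSq V.toBlocks₁₂ ≤ (E - 2 * m) ^ 2 / 4 + (E - 2 * m) := by
  obtain ⟨S0, μ, hmu, hS0sym, hSKS, hSKtr, hKtr⟩ := exists_S0 V.toBlocks₁₂
  set A := V.toBlocks₁₁ with hA
  set C := V.toBlocks₁₂ with hC
  set B := V.toBlocks₂₂ with hB
  have hkey := key_ineq V hsym hpsd (S0 * C) S0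
  rw [← hA, ← hB, ← hC] at hkey
  have e1 : (S0 * C)ᵀ = Cᵀ * S0 := by rw [Matrix.transpose_mul, hS0sym]
  have key2 : ((S0*C)ᵀ * A * (S0*C)).trace + (S0ᵀ * A * S0).trace = A.trace := by
    rw [e1, hS0sym]
    have eA1 : (Cᵀ * S0 * A * (S0*C)).trace = ((S0*C) * (Cᵀ * S0) * A).trace :=
      Matrix.trace_mul_cycle _ _ _
    have eB1 : (S0 * A * S0).trace = (S0 * S0 * A).trace := Matrix.trace_mul_cycle _ _ _
    rw [eA1, eB1, ← Matrix.trace_add, ← Matrix.add_mul]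
    have : S0 * C * (Cᵀ * S0) + S0 * S0 = S0 * (C * Cᵀ + 1) * S0 := by
      noncomm_ring
    rw [this, hSKS, Matrix.one_mul]
  have key3 : ((S0*C)ᵀ * C).trace = (S0 * (C * Cᵀ + 1)).trace - S0.trace := by
    rw [e1]
    have : (Cᵀ * S0 * C).trace = (C * (Cᵀ * S0)).trace := Matrix.trace_mul_comm _ _
    rw [this, ← Matrix.mul_assoc, Matrix.trace_mul_comm]
    have : S0 * (C * Cᵀ + 1) = S0 * (C * Cᵀ) + S0 := by noncomm_ring
    rw [this, Matrix.trace_add]; ring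
  have hEAB : V.trace = A.trace + B.trace := by
    nth_rewrite 1 [← Matrix.fromBlocks_toBlocks V]
    rw [trace_fromBlocks]
  have hE2 : 2 * (∑ i, Real.sqrt (μ i)) ≤ E := by
    rw [hE, hEAB, ← hSKtr]; linarith
  -- Frobenius norm equals trace of C*Cᵀ
  have hfrob : frobSq C = (C * Cᵀ).trace := by
    simp [frobSq, Matrix.trace, Matrix.diag, Matrix.mul_apply, sq]
  have htr1 : ((1 : Matrix (Fin m) (Fin m) ℝ)).trace = (m : ℝ) := by
    simp [Matrix.trace_one]
  have hfrob2 : frobSq C = (∑ i, μ i) - m := by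
    rw [hfrob, ← hKtr, Matrix.trace_add, htr1]; ring
  -- scalar endgame
  set t := ∑ i, (Real.sqrt (μ i) - 1) with ht
  have hy : ∀ i : Fin m, 0 ≤ Real.sqrt (μ i) - 1 := by
    intro i
    have : (1:ℝ) = Real.sqrt 1 := (Real.sqrt_one).symm
    have h := Real.sqrt_le_sqrt (hmu i)
    rw [Real.sqrt_one] at h
    linarith
  have ht0 : 0 ≤ t := Finset.sum_nonneg fun i _ => hy i
  have hsumsplit : (∑ i, Real.sqrt (μ i)) = t + m := by
    rw [ht, Finset.sum_sub_distrib]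
    simp
  have h2t : 2 * t ≤ E - 2 * m := by rw [hsumsplit] at hE2; linarith
  have hquad : frobSq C ≤ t^2 + 2*t := by
    have hmuy : ∀ i : Fin m, μ i - 1 = (Real.sqrt (μ i) - 1)^2 + 2*(Real.sqrt (μ i) - 1) := by
      intro i
      have h1 : Real.sqrt (μ i) * Real.sqrt (μ i) = μ i :=
        Real.mul_self_sqrt (le_trans zero_le_one (hmu i))
      nlinarith [h1]
    have : frobSq C = (∑ i, (Real.sqrt (μ i) - 1)^2) + 2*t := by
      rw [hfrob2, ht, Finset.mul_sum, ← Finset.sum_add_distrib]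
      rw [show (∑ i, μ i) - (m:ℝ) = ∑ i : Fin m, (μ i - 1) by
        rw [Finset.sum_sub_distrib]; simp]
      exact Finset.sum_congr rfl fun i _ => hmuy i
    rw [this]
    have hsq : (∑ i, (Real.sqrt (μ i) - 1)^2) ≤ t^2 := by
      rw [ht]
      exact Finset.sum_sq_le_sq_sum_of_nonneg fun i _ => hy i
    linarith
  nlinarith [hquad, h2t, ht0]
end
end

section
/- Let A be an m×m real symmetric positive definite matrix and let M be an m×m real symmetric matrix. Let A^{1/2} denote the (unique) positive definite square root of A and A^{−1/2} its inverse. Then ‖A^{1/2} M A^{−1/2}‖_F² ≥ ‖M‖_F². -/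
open Matrix

noncomputable section

/-- The positive semidefinite square root of a positive semidefinite matrix
(the definition Mathlib had as `Matrix.PosSemidef.sqrt`, since removed). -/
def Matrix.PosSemidef.sqrt {n : Type*} [Fintype n] [DecidableEq n]
    {A : Matrix n n ℝ} (hA : A.PosSemidef) : Matrix n n ℝ :=
  hA.1.eigenvectorUnitary.1 * diagonal ((Real.sqrt ·) ∘ hA.1.eigenvalues) *
  (star hA.1.eigenvectorUnitary : Matrix n n ℝ)

lemma frobSq_key {n : Type*} [Fintype n] (N : Matrix n n ℝ) (hN : Nᵀ = N)
    (d : n → ℝ) (hd : ∀ i, 0 < d i) :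
    ∑ i, ∑ j, (N i j) ^ 2 ≤ ∑ i, ∑ j, (d i * N i j * (d j)⁻¹) ^ 2 := by
  have hsym : ∀ i j, N j i = N i j := fun i j =>
    (Matrix.transpose_apply N i j).symm.trans (congrFun (congrFun hN i) j)
  have h2 : ∑ i, ∑ j, (2 * (N i j) ^ 2) ≤
      ∑ i, ∑ j, ((d i * N i j * (d j)⁻¹) ^ 2 + (d j * N i j * (d i)⁻¹) ^ 2) := by
    refine Finset.sum_le_sum fun i _ => Finset.sum_le_sum fun j _ => ?_
    have hi := hd i
    have hj := hd j
    rw [← sub_nonneg]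
    have key : (d i * N i j * (d j)⁻¹) ^ 2 + (d j * N i j * (d i)⁻¹) ^ 2
        - 2 * (N i j)^2 = (N i j)^2 * ((d i)^2 - (d j)^2)^2 * (((d i)^2)⁻¹ * ((d j)^2)⁻¹) := by
      field_simp
      ring
    rw [key]
    positivity
  have hswap : ∑ i, ∑ j, (d j * N i j * (d i)⁻¹) ^ 2
      = ∑ i, ∑ j, (d i * N i j * (d j)⁻¹) ^ 2 := by
    rw [Finset.sum_comm]
    congr 1; ext i; congr 1; ext j
    rw [hsym i j]
  simp only [Finset.sum_add_distrib] at h2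
  rw [hswap] at h2
  have h3 : ∑ i, ∑ j, (2 * (N i j) ^ 2) = 2 * ∑ i, ∑ j, (N i j) ^ 2 := by
    simp [Finset.mul_sum]
  rw [h3] at h2
  linarith

/-- For a real symmetric positive definite matrix `A` with (unique) positive definite
square root `A^{1/2}` and a real symmetric matrix `M`, one has
`‖A^{1/2} M A^{−1/2}‖_F² ≥ ‖M‖_F²`. -/
theorem frobSq_le_frobSq_conj_sqrt (m : ℕ) (A M : Matrix (Fin m) (Fin m) ℝ)
    (hA : A.PosDef) (hM : M.IsSymm) :
    frobSq M ≤ frobSq (hA.posSemidef.sqrt * M * (hA.posSemidef.sqrt)⁻¹) := by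
  classical
  set U : Matrix (Fin m) (Fin m) ℝ := hA.posSemidef.1.eigenvectorUnitary.1 with hU
  set d : Fin m → ℝ := Real.sqrt ∘ hA.posSemidef.1.eigenvalues with hdd
  have hd : ∀ i, 0 < d i := fun i => Real.sqrt_pos.mpr (hA.eigenvalues_pos i)
  have hmem := hA.posSemidef.1.eigenvectorUnitary.2
  have hUU : star U * U = 1 := Matrix.mem_unitaryGroup_iff'.mp hmem
  have hUU' : U * star U = 1 := Matrix.mem_unitaryGroup_iff.mp hmem
  have hstar : (star U : Matrix (Fin m) (Fin m) ℝ) = Uᵀ := by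
    ext i j; simp [Matrix.star_apply]
  have hUtU : Uᵀ * U = 1 := by rw [← hstar]; exact hUU
  have hUUt : U * Uᵀ = 1 := by rw [← hstar]; exact hUU'
  have hS : hA.posSemidef.sqrt = U * diagonal d * Uᵀ := by
    rw [Matrix.PosSemidef.sqrt, hstar]
  set D : Matrix (Fin m) (Fin m) ℝ := diagonal d with hD
  set Di : Matrix (Fin m) (Fin m) ℝ := diagonal (fun i => (d i)⁻¹) with hDi
  have hDDi : D * Di = 1 := by
    rw [hD, hDi, diagonal_mul_diagonal]
    rw [show (fun i => d i * (d i)⁻¹) = fun _ => (1:ℝ) from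
      funext fun i => mul_inv_cancel₀ (hd i).ne', diagonal_one]
  have hSinv : (hA.posSemidef.sqrt)⁻¹ = U * Di * Uᵀ := by
    apply Matrix.inv_eq_right_inv
    rw [hS]
    calc U * D * Uᵀ * (U * Di * Uᵀ)
        = U * D * (Uᵀ * U) * Di * Uᵀ := by noncomm_ring
      _ = U * (D * Di) * Uᵀ := by rw [hUtU]; noncomm_ring
      _ = 1 := by rw [hDDi, mul_one, hUUt]
  set N : Matrix (Fin m) (Fin m) ℝ := Uᵀ * M * U with hN
  have hNsym : Nᵀ = N := by
    rw [hN, Matrix.transpose_mul, Matrix.transpose_mul, Matrix.transpose_transpose,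
      Matrix.IsSymm.eq hM, Matrix.mul_assoc]
  have hconj : hA.posSemidef.sqrt * M * (hA.posSemidef.sqrt)⁻¹
      = U * (D * N * Di) * Uᵀ := by
    rw [hSinv, hS, hN]
    noncomm_ring
  have hfrob : ∀ B : Matrix (Fin m) (Fin m) ℝ, frobSq B = Matrix.trace (Bᵀ * B) := by
    intro B
    rw [Matrix.trace, frobSq, Finset.sum_comm]
    congr 1; ext j
    simp [Matrix.mul_apply, Matrix.diag, sq]
  have hinvar : ∀ B : Matrix (Fin m) (Fin m) ℝ, frobSq (U * B * Uᵀ) = frobSq B := by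
    intro B
    rw [hfrob, hfrob]
    have h1 : (U * B * Uᵀ)ᵀ * (U * B * Uᵀ) = U * (Bᵀ * B) * Uᵀ := by
      rw [Matrix.transpose_mul, Matrix.transpose_mul, Matrix.transpose_transpose]
      calc Uᵀᵀ * (Bᵀ * Uᵀ) * (U * B * Uᵀ)
          = U * Bᵀ * (Uᵀ * U) * B * Uᵀ := by rw [Matrix.transpose_transpose]; noncomm_ring
        _ = U * (Bᵀ * B) * Uᵀ := by rw [hUtU]; noncomm_ring
    rw [h1, Matrix.trace_mul_comm (U * (Bᵀ * B)) Uᵀ, ← Matrix.mul_assoc, hUtU, Matrix.one_mul]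
  have hMN : frobSq M = frobSq N := by
    have : M = U * N * Uᵀ := by
      rw [hN]
      calc M = (U * Uᵀ) * M * (U * Uᵀ) := by rw [hUUt]; noncomm_ring
        _ = U * (Uᵀ * M * U) * Uᵀ := by noncomm_ring
    rw [this, hinvar]
  rw [hconj, hinvar, hMN]
  have hentry : frobSq (D * N * Di) = ∑ i, ∑ j, (d i * N i j * (d j)⁻¹) ^ 2 := by
    rw [frobSq]
    congr 1; ext i; congr 1; ext j
    rw [hD, hDi, Matrix.mul_diagonal, Matrix.diagonal_mul]
  rw [hentry, frobSq]
  exact frobSq_key N hNsym d hd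
end
end

section
/- Let A be an m×m real symmetric positive definite matrix all of whose eigenvalues are at least 1 (equivalently, A − I_m is positive semidefinite), let θ₁, …, θ_m ∈ ℝ, and set C = diag(cos θ₁, …, cos θ_m) and S = diag(sin θ₁, …, sin θ_m). Then ‖C(A − A⁻¹)S‖_F² ≤ (1/4)‖A − A⁻¹‖_F². -/
open Matrix

noncomputable section

open scoped MatrixOrder in
/-- Schur-product-type positivity: for `M = Bᵀ B` (i.e. PSD) the entrywise square
is again PSD, expressed as nonnegativity of the quadratic form. -/
lemma quadForm_sq_nonneg {m : ℕ} (M : Matrix (Fin m) (Fin m) ℝ) (hM : M.PosSemidef)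
    (u : Fin m → ℝ) : 0 ≤ ∑ i, ∑ j, u i * u j * (M i j) ^ 2 := by
  obtain ⟨B, hB⟩ := CStarAlgebra.nonneg_iff_eq_star_mul_self.mp hM.nonneg
  have hMe : ∀ i j, M i j = ∑ k, B k i * B k j := by
    intro i j
    rw [hB]
    simp [Matrix.mul_apply, Matrix.conjTranspose_apply, Matrix.star_eq_conjTranspose]
  have key : (∑ i, ∑ j, u i * u j * (M i j) ^ 2) =
      ∑ k, ∑ l, (∑ i, u i * B k i * B l i) ^ 2 := by
    have h1 : ∀ i j, u i * u j * (M i j) ^ 2 =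
        ∑ k, ∑ l, (u i * B k i * B l i) * (u j * B k j * B l j) := by
      intro i j
      rw [hMe, sq, Finset.sum_mul_sum]
      simp only [Finset.mul_sum]
      refine Finset.sum_congr rfl fun k _ => Finset.sum_congr rfl fun l _ => by ring
    calc (∑ i, ∑ j, u i * u j * (M i j) ^ 2)
        = ∑ i, ∑ j, ∑ k, ∑ l, (u i * B k i * B l i) * (u j * B k j * B l j) := by
          exact Finset.sum_congr rfl fun i _ => Finset.sum_congr rfl fun j _ => h1 i j
      _ = ∑ i, ∑ k, ∑ j, ∑ l, (u i * B k i * B l i) * (u j * B k j * B l j) := by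
          exact Finset.sum_congr rfl fun i _ => Finset.sum_comm
      _ = ∑ k, ∑ i, ∑ j, ∑ l, (u i * B k i * B l i) * (u j * B k j * B l j) :=
          Finset.sum_comm
      _ = ∑ k, ∑ i, ∑ l, ∑ j, (u i * B k i * B l i) * (u j * B k j * B l j) := by
          exact Finset.sum_congr rfl fun k _ => Finset.sum_congr rfl fun i _ =>
            Finset.sum_comm
      _ = ∑ k, ∑ l, ∑ i, ∑ j, (u i * B k i * B l i) * (u j * B k j * B l j) := by
          exact Finset.sum_congr rfl fun k _ => Finset.sum_comm
      _ = ∑ k, ∑ l, (∑ i, u i * B k i * B l i) ^ 2 := by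
          refine Finset.sum_congr rfl fun k _ => Finset.sum_congr rfl fun l _ => ?_
          rw [sq, Finset.sum_mul_sum]
  rw [key]
  exact Finset.sum_nonneg fun k _ => Finset.sum_nonneg fun l _ => sq_nonneg _

open scoped MatrixOrder in
/-- `A − A⁻¹` is PSD when `A` is positive definite with `A − 1 ⪰ 0`. -/
lemma sub_inv_posSemidef {m : ℕ} (A : Matrix (Fin m) (Fin m) ℝ)
    (hA : A.PosDef) (hA1 : (A - 1).PosSemidef) : (A - A⁻¹).PosSemidef := by
  have hApsd := hA.posSemidef
  set R := CFC.sqrt A with hRdef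
  have hRR : R * R = A := CFC.sqrt_mul_sqrt_self A hApsd.nonneg
  have hRH : Rᴴ = R := (CFC.sqrt_nonneg A).posSemidef.isHermitian
  have hdetA : A.det ≠ 0 := ne_of_gt hA.det_pos
  have hRdet : IsUnit R.det := by
    have : R.det * R.det = A.det := by rw [← Matrix.det_mul, hRR]
    refine isUnit_iff_ne_zero.mpr fun h => hdetA ?_
    rw [← this, h, zero_mul]
  have hinv_mul : R⁻¹ * R = 1 := Matrix.nonsing_inv_mul R hRdet
  have hmul_inv : R * R⁻¹ = 1 := Matrix.mul_nonsing_inv R hRdet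
  have hconj : (1 : Matrix (Fin m) (Fin m) ℝ) - A⁻¹ = (R⁻¹)ᴴ * (A - 1) * R⁻¹ := by
    have hRinvH : (R⁻¹)ᴴ = R⁻¹ := by rw [Matrix.conjTranspose_nonsing_inv, hRH]
    rw [hRinvH, Matrix.mul_sub, Matrix.sub_mul, Matrix.mul_one]
    have e1 : R⁻¹ * A * R⁻¹ = 1 := by
      rw [← hRR, ← Matrix.mul_assoc, Matrix.mul_assoc (R⁻¹ * R), hmul_inv,
        Matrix.mul_one, hinv_mul]
    have e2 : R⁻¹ * R⁻¹ = A⁻¹ := by rw [← Matrix.mul_inv_rev, hRR]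
    rw [Matrix.mul_assoc] at e1 ⊢
    rw [e1, e2]
  have h2 : ((1 : Matrix (Fin m) (Fin m) ℝ) - A⁻¹).PosSemidef := by
    rw [hconj]; exact hA1.conjTranspose_mul_mul_same R⁻¹
  have := hA1.add h2
  rwa [sub_add_sub_cancel] at this

/-- For a real symmetric positive definite matrix `A` all of whose eigenvalues are at
least `1` (i.e. `A − I ⪰ 0`) and diagonal matrices `C = diag(cos θ₁, …, cos θ_m)`,
`S = diag(sin θ₁, …, sin θ_m)`, one has `‖C(A − A⁻¹)S‖_F² ≤ (1/4)‖A − A⁻¹‖_F²`. -/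
theorem frobSq_C_mul_A_sub_Ainv_mul_S_le (m : ℕ) (A : Matrix (Fin m) (Fin m) ℝ)
    (hA : A.PosDef) (hAsym : A.IsSymm) (hA1 : (A - 1).PosSemidef) (θ : Fin m → ℝ) :
    frobSq ((diagonal fun i => Real.cos (θ i)) * (A - A⁻¹) *
        (diagonal fun i => Real.sin (θ i))) ≤
      (1 / 4) * frobSq (A - A⁻¹) := by
  set M := A - A⁻¹ with hMdef
  have hMpsd : M.PosSemidef := sub_inv_posSemidef A hA hA1
  have hMe : ∀ i j, M j i = M i j := by
    intro i j
    have := hMpsd.isHermitian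
    have h := congrFun (congrFun this i) j
    simpa [Matrix.conjTranspose_apply] using h
  set u : Fin m → ℝ := fun i => Real.cos (2 * θ i) with hu
  have quad : 0 ≤ ∑ i, ∑ j, u i * u j * (M i j) ^ 2 := quadForm_sq_nonneg M hMpsd u
  have hswap : (∑ i, ∑ j, u i * (M i j) ^ 2) = ∑ i, ∑ j, u j * (M i j) ^ 2 := by
    rw [Finset.sum_comm]
    exact Finset.sum_congr rfl fun i _ => Finset.sum_congr rfl fun j _ => by rw [hMe i j]
  have hentry : frobSq ((diagonal fun i => Real.cos (θ i)) * M *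
      (diagonal fun i => Real.sin (θ i))) =
      ∑ i, ∑ j, (Real.cos (θ i) * M i j * Real.sin (θ j)) ^ 2 := by
    unfold frobSq
    refine Finset.sum_congr rfl fun i _ => Finset.sum_congr rfl fun j _ => ?_
    rw [Matrix.mul_diagonal, Matrix.diagonal_mul]
  have expand : ∀ i j, (Real.cos (θ i) * M i j * Real.sin (θ j)) ^ 2 =
      (1/4) * (M i j) ^ 2 + (1/4) * (u i * (M i j) ^ 2) - (1/4) * (u j * (M i j) ^ 2)
        - (1/4) * (u i * u j * (M i j) ^ 2) := by
    intro i j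
    have h1 : Real.cos (θ i) ^ 2 = 1 / 2 + Real.cos (2 * θ i) / 2 := Real.cos_sq _
    have h2 : Real.sin (θ j) ^ 2 = 1 - Real.cos (θ j) ^ 2 := Real.sin_sq _
    have h3 : Real.cos (θ j) ^ 2 = 1 / 2 + Real.cos (2 * θ j) / 2 := Real.cos_sq _
    have : (Real.cos (θ i) * M i j * Real.sin (θ j)) ^ 2 =
        Real.cos (θ i) ^ 2 * Real.sin (θ j) ^ 2 * (M i j) ^ 2 := by ring
    rw [this, h1, h2, h3, hu]
    ring
  rw [hentry]
  have hsum : (∑ i, ∑ j, (Real.cos (θ i) * M i j * Real.sin (θ j)) ^ 2) =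
      (1/4) * (∑ i, ∑ j, (M i j) ^ 2) + (1/4) * (∑ i, ∑ j, u i * (M i j) ^ 2)
        - (1/4) * (∑ i, ∑ j, u j * (M i j) ^ 2)
        - (1/4) * (∑ i, ∑ j, u i * u j * (M i j) ^ 2) := by
    simp only [expand, Finset.sum_sub_distrib, Finset.sum_add_distrib, ← Finset.mul_sum]
  rw [hsum]
  have : frobSq M = ∑ i, ∑ j, (M i j) ^ 2 := rfl
  rw [this]
  linarith [quad, hswap]
end
end

section
/- Let m ≥ 1, let S be a 2m×2m real matrix that is both orthogonal (SᵀS = I) and symplectic (S Ω Sᵀ = Ω with Ω = [[0, I_m], [−I_m, 0]]), let D = diag(d₁, …, d_m) with all d_i ≥ 1, and set V = S · [[D, 0], [0, D⁻¹]] · Sᵀ and E = Σ_{i=1}^m (d_i + 1/d_i) (= Tr V). Writing V in block form V = [[Vx, Vxp], [Vxpᵀ, Vp]] with m×m blocks, the symplectic coherence satisfies ‖Vxp‖_F² ≤ (E − 2m)²/4 + (E − 2m). -/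
/-!
An orthogonal symplectic `S` has the block form `[[X, Y], [-Y, X]]`, so
`Vxp = Y D⁻¹ Xᵀ - X D Yᵀ`. The matrices `a = XᵀX` and `g = XᵀY` are symmetric and
`[[a, g], [g, 1 - a]] = Sᵀ diag(1, 0) S` is a projection, whence `a² + g² = a`. Expanding
`‖Vxp‖_F²` entrywise in `a` and `g`, the `(j, k)` term is at most
`δⱼₖ (sinh²(2rⱼ) + 2 aⱼⱼ) - 2 (aⱼₖ² + gⱼₖ²)` (off the diagonal because `x + x⁻¹ ≥ 2`); summed,
the last two parts give `2 tr (a - a² - g²) = 0`, so `‖Vxp‖_F² ≤ Σⱼ sinh²(2rⱼ)`. Finally, with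
`wⱼ = dⱼ + dⱼ⁻¹ - 2 ≥ 0`, we have `sinh²(2rⱼ) = wⱼ²/4 + wⱼ`, `E - 2m = Σⱼ wⱼ` and
`Σⱼ wⱼ² ≤ (Σⱼ wⱼ)²`.
-/

open Matrix

noncomputable section

lemma two_le_add_inv {x : ℝ} (hx : 0 < x) : 2 ≤ x + x⁻¹ := by
  have := mul_inv_cancel₀ hx.ne'
  nlinarith [sq_nonneg (x - 1), inv_pos.2 hx]

lemma coherence_diag_term_le {t : ℝ} (ht : t ≠ 0) (a g : ℝ) :
    (t⁻¹ * t⁻¹ + t * t) * (a * (1 - a)) - (t⁻¹ * t + t * t⁻¹) * (g * g) ≤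
      ((t - t⁻¹) / 2) ^ 2 + 2 * a - 2 * (a * a + g * g) := by
  have key : ((t - t⁻¹) / 2) ^ 2 + 2 * a - 2 * (a * a + g * g) -
      ((t⁻¹ * t⁻¹ + t * t) * (a * (1 - a)) - (t⁻¹ * t + t * t⁻¹) * (g * g)) =
      ((t - t⁻¹) * (1 - 2 * a) / 2) ^ 2 := by
    field_simp
    ring
  rw [← sub_nonneg, key]
  positivity

lemma coherence_offDiag_term_le {s t : ℝ} (hs : 0 < s) (ht : 0 < t) (a g : ℝ) :
    -(s⁻¹ * t⁻¹ + s * t) * (a * a) - (s⁻¹ * t + s * t⁻¹) * (g * g) ≤ -2 * (a * a + g * g) := by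
  have h₁ := two_le_add_inv (mul_pos hs ht)
  have h₂ := two_le_add_inv (div_pos ht hs)
  rw [mul_inv] at h₁
  rw [div_eq_mul_inv, mul_inv, inv_inv] at h₂
  nlinarith [mul_nonneg (sub_nonneg.2 h₁) (mul_self_nonneg a),
    mul_nonneg (sub_nonneg.2 h₂) (mul_self_nonneg g)]

lemma sum_sq_half_sub_inv_le {ι : Type*} [Fintype ι] (d : ι → ℝ) (hd : ∀ i, 0 < d i) :
    ∑ i, ((d i - (d i)⁻¹) / 2) ^ 2 ≤
      (∑ i, (d i + 1 / d i) - 2 * Fintype.card ι) ^ 2 / 4 +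
        (∑ i, (d i + 1 / d i) - 2 * Fintype.card ι) := by
  set w : ι → ℝ := fun i => d i + (d i)⁻¹ - 2
  have hw : ∀ i, 0 ≤ w i := fun i => sub_nonneg.2 (two_le_add_inv (hd i))
  have hsq : ∀ i, ((d i - (d i)⁻¹) / 2) ^ 2 = w i ^ 2 / 4 + w i := fun i => by
    have := (hd i).ne'
    simp only [w]
    field_simp
    ring
  have hsum : ∑ i, (d i + 1 / d i) - 2 * Fintype.card ι = ∑ i, w i := by
    simp [w, Finset.sum_sub_distrib, mul_comm]
  rw [hsum, Finset.sum_congr rfl fun i _ => hsq i, Finset.sum_add_distrib, ← Finset.sum_div]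
  gcongr
  exact Finset.sum_sq_le_sq_sum_of_nonneg fun i _ => hw i

lemma frobSq_eq_trace_mul_transpose {n k : Type*} [Fintype n] [Fintype k] (A : Matrix n k ℝ) :
    frobSq A = trace (A * Aᵀ) := by
  simp [frobSq, trace, mul_apply, sq]

lemma trace_diagonal_mul_diagonal_mul {n R : Type*} [Fintype n] [DecidableEq n] [CommSemiring R]
    (x y : n → R) (A B : Matrix n n R) :
    trace (diagonal x * A * diagonal y * B) = ∑ j, ∑ k, x j * y k * A j k * B k j := by
  simp only [trace, diag, mul_apply, diagonal_apply, ite_mul, mul_ite, zero_mul, mul_zero,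
    Finset.sum_ite_eq, Finset.sum_ite_eq', Finset.mem_univ, if_true]
  exact Finset.sum_congr rfl fun j _ => Finset.sum_congr rfl fun k _ => by ring

lemma eq_fromBlocks_of_mul_Omega_comm {m : ℕ} {S : Matrix (Fin m ⊕ Fin m) (Fin m ⊕ Fin m) ℝ}
    (h : S * Omega m = Omega m * S) :
    S = fromBlocks S.toBlocks₁₁ S.toBlocks₁₂ (-S.toBlocks₁₂) S.toBlocks₁₁ := by
  rw [← fromBlocks_toBlocks S, Omega, fromBlocks_multiply, fromBlocks_multiply, fromBlocks_inj] at h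
  simp only [Matrix.mul_zero, Matrix.mul_one, Matrix.mul_neg, Matrix.zero_mul, Matrix.one_mul,
    Matrix.neg_mul, zero_add, add_zero] at h
  conv_lhs => rw [← fromBlocks_toBlocks S]
  rw [← h.1, ← h.2.1]

section Passive

variable {n : Type*} [Fintype n]

lemma toBlocks₁₂_fromBlocks_conj (X Y D₁ D₂ : Matrix n n ℝ) :
    (fromBlocks X Y (-Y) X * fromBlocks D₁ 0 0 D₂ * (fromBlocks X Y (-Y) X)ᵀ).toBlocks₁₂ =
      Y * D₂ * Xᵀ - X * D₁ * Yᵀ := by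
  simp only [fromBlocks_transpose, fromBlocks_multiply, toBlocks_fromBlocks₁₂, Matrix.mul_zero,
    add_zero, zero_add, transpose_neg, Matrix.mul_neg]
  abel

variable [DecidableEq n]

lemma gram_sq_add_cross_sq {X Y : Matrix n n ℝ} (hg : Yᵀ * X = Xᵀ * Y)
    (h : X * Xᵀ + Y * Yᵀ = 1) :
    Xᵀ * X * (Xᵀ * X) + Xᵀ * Y * (Xᵀ * Y) = Xᵀ * X := by
  calc Xᵀ * X * (Xᵀ * X) + Xᵀ * Y * (Xᵀ * Y) = Xᵀ * X * (Xᵀ * X) + Xᵀ * Y * (Yᵀ * X) := by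
        rw [hg]
    _ = Xᵀ * (X * Xᵀ + Y * Yᵀ) * X := by
        simp only [Matrix.mul_add, Matrix.add_mul, Matrix.mul_assoc]
    _ = Xᵀ * X := by rw [h, Matrix.mul_one]

lemma fromBlocks_orthogonal_relations {X Y : Matrix n n ℝ}
    (h : (fromBlocks X Y (-Y) X)ᵀ * fromBlocks X Y (-Y) X = 1) :
    Xᵀ * X + Yᵀ * Y = 1 ∧ Yᵀ * X = Xᵀ * Y ∧ X * Xᵀ + Y * Yᵀ = 1 := by
  have h' := mul_eq_one_comm.mp h
  rw [fromBlocks_transpose, fromBlocks_multiply, ← fromBlocks_one, fromBlocks_inj] at h h'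
  simp only [transpose_neg, Matrix.neg_mul, Matrix.mul_neg, neg_neg] at h h'
  exact ⟨h.1, (add_neg_eq_zero.mp h.2.1).symm, h'.1⟩

lemma frobSq_sub_eq_sum (X Y : Matrix n n ℝ) (d e : n → ℝ) (hg : Yᵀ * X = Xᵀ * Y) :
    frobSq (Y * diagonal e * Xᵀ - X * diagonal d * Yᵀ) =
      ∑ j, ∑ k, (e j * e k * (Xᵀ * X) j k * (Yᵀ * Y) k j
        + d j * d k * (Yᵀ * Y) j k * (Xᵀ * X) k j
        - (e j * d k + d j * e k) * (Xᵀ * Y) j k * (Xᵀ * Y) k j) := by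
  have cycle : ∀ A B C D₁ D₂ F : Matrix n n ℝ,
      trace (A * B * C * (D₁ * (D₂ * F))) = trace (B * (C * D₁) * D₂ * (F * A)) := by
    intro A B C D₁ D₂ F
    simp only [Matrix.mul_assoc]
    rw [trace_mul_comm]
    simp only [Matrix.mul_assoc]
  rw [frobSq_eq_trace_mul_transpose, transpose_sub, transpose_mul, transpose_mul, transpose_mul,
    transpose_mul, transpose_transpose, transpose_transpose, diagonal_transpose,
    diagonal_transpose, sub_mul, mul_sub, mul_sub, trace_sub, trace_sub, trace_sub,
    cycle, cycle, cycle, cycle, hg]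
  simp only [trace_diagonal_mul_diagonal_mul, ← Finset.sum_sub_distrib]
  exact Finset.sum_congr rfl fun j _ => Finset.sum_congr rfl fun k _ => by ring

lemma frobSq_coherence_block_le {X Y : Matrix n n ℝ} (h₁ : Xᵀ * X + Yᵀ * Y = 1)
    (hg : Yᵀ * X = Xᵀ * Y) (h₂ : X * Xᵀ + Y * Yᵀ = 1) (d : n → ℝ) (hd : ∀ i, 0 < d i) :
    frobSq (Y * diagonal (fun i => (d i)⁻¹) * Xᵀ - X * diagonal d * Yᵀ) ≤
      ∑ i, ((d i - (d i)⁻¹) / 2) ^ 2 := by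
  have hproj := gram_sq_add_cross_sq hg h₂
  rw [frobSq_sub_eq_sum X Y d _ hg]
  set a := Xᵀ * X
  set g := Xᵀ * Y
  have hb : Yᵀ * Y = 1 - a := eq_sub_of_add_eq' h₁
  have ha : ∀ j k, a k j = a j k := fun j k => by
    simpa using congrFun (congrFun (transpose_mul Xᵀ X) j) k
  have hgs : ∀ j k, g k j = g j k := fun j k => by
    simpa [hg] using congrFun (congrFun (transpose_mul Xᵀ Y) j) k
  calc _ ≤ ∑ j, ∑ k, ((if j = k then ((d j - (d j)⁻¹) / 2) ^ 2 + 2 * a j k else 0)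
          - 2 * (a j k * a k j + g j k * g k j)) := by
        refine Finset.sum_le_sum fun j _ => Finset.sum_le_sum fun k _ => ?_
        rw [hb, Matrix.sub_apply, Matrix.sub_apply, ha j k, hgs j k]
        by_cases hjk : j = k
        · subst hjk
          simp only [one_apply_eq, if_true]
          linarith [coherence_diag_term_le (hd j).ne' (a j j) (g j j)]
        · simp only [one_apply_ne hjk, one_apply_ne (Ne.symm hjk), if_neg hjk]
          linarith [coherence_offDiag_term_le (hd j) (hd k) (a j k) (g j k)]
    _ = ∑ i, ((d i - (d i)⁻¹) / 2) ^ 2 + 2 * trace a - 2 * trace (a * a + g * g) := by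
        simp only [Finset.sum_sub_distrib, Finset.sum_ite_eq, Finset.mem_univ, if_true,
          Finset.sum_add_distrib, ← Finset.mul_sum, trace, diag, Matrix.add_apply, mul_apply]
    _ = ∑ i, ((d i - (d i)⁻¹) / 2) ^ 2 := by rw [hproj]; ring

end Passive

theorem pureGaussian_symplecticCoherence_le_max_general (m : ℕ)
    (S : Matrix (Fin m ⊕ Fin m) (Fin m ⊕ Fin m) ℝ)
    (hOrth : Sᵀ * S = 1)
    (hSymp : S * Omega m * Sᵀ = Omega m)
    (d : Fin m → ℝ) (hd : ∀ i, 1 ≤ d i)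
    (E : ℝ) (hE : E = ∑ i, (d i + 1 / d i)) :
    frobSq ((S * fromBlocks (diagonal d) 0 0 (diagonal fun i => (d i)⁻¹) * Sᵀ).toBlocks₁₂) ≤
      (E - 2 * m) ^ 2 / 4 + (E - 2 * m) := by
  have hd₀ : ∀ i, 0 < d i := fun i => zero_lt_one.trans_le (hd i)
  have hcomm : S * Omega m = Omega m * S := by
    calc S * Omega m = S * Omega m * Sᵀ * S := by rw [Matrix.mul_assoc _ Sᵀ, hOrth, Matrix.mul_one]
      _ = Omega m * S := by rw [hSymp]
  have hS := eq_fromBlocks_of_mul_Omega_comm hcomm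
  obtain ⟨h₁, hg, h₂⟩ := fromBlocks_orthogonal_relations (hS ▸ hOrth)
  rw [hS, toBlocks₁₂_fromBlocks_conj, hE]
  calc _ ≤ ∑ i, ((d i - (d i)⁻¹) / 2) ^ 2 := frobSq_coherence_block_le h₁ hg h₂ d hd₀
    _ ≤ _ := by simpa using sum_sq_half_sub_inv_le d hd₀

/-- Maximal symplectic coherence of pure Gaussian states: if `S` is a symplectic orthogonal
`2m × 2m` matrix, `D = diag(d₁, …, d_m)` with all `d_i ≥ 1`, `V = S ⬝ [[D,0],[0,D⁻¹]] ⬝ Sᵀ`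
(the Bloch–Messiah form of a pure Gaussian covariance matrix) and
`E = Σ_i (d_i + 1/d_i) = Tr V`, then the position-momentum block `Vxp` of `V` satisfies
`‖Vxp‖_F² ≤ (E − 2m)²/4 + (E − 2m)`. -/
theorem pureGaussian_symplecticCoherence_le_max (m : ℕ) (hm : 1 ≤ m)
    (S : Matrix (Fin m ⊕ Fin m) (Fin m ⊕ Fin m) ℝ)
    (hOrth : Sᵀ * S = 1)
    (hSymp : S * Omega m * Sᵀ = Omega m)
    (d : Fin m → ℝ) (hd : ∀ i, 1 ≤ d i)
    (E : ℝ) (hE : E = ∑ i, (d i + 1 / d i)) :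
    frobSq ((S * fromBlocks (diagonal d) 0 0 (diagonal fun i => (d i)⁻¹) * Sᵀ).toBlocks₁₂) ≤
      (E - 2 * m) ^ 2 / 4 + (E - 2 * m) :=
  pureGaussian_symplecticCoherence_le_max_general m S hOrth hSymp d hd E hE
end
end

section
/- Let m ≥ 1 and let d₁, …, d_m be real numbers with d_i ≥ 1 for all i. Define S₁ = Σ_{i≠j} (d_i/d_j + d_j/d_i) and S₂ = Σ_{i≠j} (d_i d_j + 1/(d_i d_j)), where the sums run over ordered pairs of distinct indices. Then 2/(m+1) + S₁/(4m(m+1)) + S₂/(4m(m+1)) ≥ 3/(m+2) + S₁/(2m(m+2)). -/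
/-! The difference of the two sides is
`(m (S₂ - S₁) + 2 (S₂ - 2m(m-1))) / (4m(m+1)(m+2))`, and both brackets are nonnegative term by
term: `d_i d_j + 1/(d_i d_j) - (d_i/d_j + d_j/d_i) = (d_i² - 1)(d_j² - 1)/(d_i d_j) ≥ 0`, and
`x + 1/x ≥ 2` for `x > 0`. -/

noncomputable section

/-- `S₁ = Σ_{i≠j} (d_i/d_j + d_j/d_i)`, summed over ordered pairs of distinct indices. -/
def S1 {m : ℕ} (d : Fin m → ℝ) : ℝ :=
  ∑ i, ∑ j, if i ≠ j then d i / d j + d j / d i else 0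

/-- `S₂ = Σ_{i≠j} (d_i d_j + 1/(d_i d_j))`, summed over ordered pairs of distinct indices. -/
def S2 {m : ℕ} (d : Fin m → ℝ) : ℝ :=
  ∑ i, ∑ j, if i ≠ j then d i * d j + 1 / (d i * d j) else 0

lemma div_add_div_le_mul_add_one_div {a b : ℝ} (ha : 1 ≤ a) (hb : 1 ≤ b) :
    a / b + b / a ≤ a * b + 1 / (a * b) := by
  have hab : 0 < a * b := by positivity
  have key : a * b + 1 / (a * b) - (a / b + b / a) = (a ^ 2 - 1) * (b ^ 2 - 1) / (a * b) := by
    field_simp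
    ring
  have : 0 ≤ (a ^ 2 - 1) * (b ^ 2 - 1) := mul_nonneg (by nlinarith) (by nlinarith)
  linarith [div_nonneg this hab.le]

lemma two_le_add_one_div {x : ℝ} (hx : 0 < x) : 2 ≤ x + 1 / x := by
  have key : x + 1 / x - 2 = (x - 1) ^ 2 / x := by
    field_simp
    ring
  linarith [div_nonneg (sq_nonneg (x - 1)) hx.le]

lemma S1_le_S2 {m : ℕ} {d : Fin m → ℝ} (hd : ∀ i, 1 ≤ d i) : S1 d ≤ S2 d := by
  refine Finset.sum_le_sum fun i _ ↦ Finset.sum_le_sum fun j _ ↦ ?_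
  split_ifs
  · exact div_add_div_le_mul_add_one_div (hd i) (hd j)
  · rfl

lemma sum_sum_ite_ne_const (m : ℕ) (c : ℝ) :
    ∑ i : Fin m, ∑ j : Fin m, (if i ≠ j then c else 0) = m * (m - 1) * c := by
  cases m <;> simp [Finset.sum_ite, Finset.filter_ne, mul_assoc]

lemma two_mul_mul_sub_one_le_S2 {m : ℕ} {d : Fin m → ℝ} (hd : ∀ i, 0 < d i) :
    2 * m * (m - 1) ≤ S2 d := by
  calc (2 : ℝ) * m * (m - 1) = ∑ i : Fin m, ∑ j : Fin m, (if i ≠ j then 2 else 0) := by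
        rw [sum_sum_ite_ne_const]; ring
    _ ≤ S2 d := Finset.sum_le_sum fun i _ ↦ Finset.sum_le_sum fun j _ ↦ by
        split_ifs
        · exact two_le_add_one_div (mul_pos (hd i) (hd j))
        · rfl

lemma orthogonal_average_le_unitary_average_of_le {M s₁ s₂ : ℝ} (hM : 0 ≤ M) (h₁₂ : s₁ ≤ s₂)
    (h₂ : 2 * M * (M - 1) ≤ s₂) :
    3 / (M + 2) + s₁ / (2 * M * (M + 2)) ≤
      2 / (M + 1) + s₁ / (4 * M * (M + 1)) + s₂ / (4 * M * (M + 1)) := by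
  -- at `M = 0` every fraction with `M` in the denominator is `0`, leaving `3 / 2 ≤ 2`
  rcases hM.eq_or_lt with rfl | hM
  · norm_num
  have key : 2 / (M + 1) + s₁ / (4 * M * (M + 1)) + s₂ / (4 * M * (M + 1)) -
      (3 / (M + 2) + s₁ / (2 * M * (M + 2))) =
      (M * (s₂ - s₁) + 2 * (s₂ - 2 * M * (M - 1))) / (4 * M * (M + 1) * (M + 2)) := by
    field_simp
    ring
  have : 0 ≤ M * (s₂ - s₁) + 2 * (s₂ - 2 * M * (M - 1)) :=
    add_nonneg (mul_nonneg hM.le (sub_nonneg.2 h₁₂)) (mul_nonneg zero_le_two (sub_nonneg.2 h₂))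
  linarith [div_nonneg this (by positivity : (0 : ℝ) ≤ 4 * M * (M + 1) * (M + 2))]

theorem unitary_average_ge_orthogonal_average_general (m : ℕ)
    (d : Fin m → ℝ) (hd : ∀ i, 1 ≤ d i) :
    3 / ((m : ℝ) + 2) + S1 d / (2 * m * (m + 2)) ≤
      2 / ((m : ℝ) + 1) + S1 d / (4 * m * (m + 1)) + S2 d / (4 * m * (m + 1)) :=
  orthogonal_average_le_unitary_average_of_le m.cast_nonneg (S1_le_S2 hd)
    (two_mul_mul_sub_one_le_S2 fun i ↦ zero_lt_one.trans_le (hd i))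

/-- Key scalar inequality showing that, at fixed energy, the Haar-unitary average squared
symplectic eigenvalue (left-hand side) dominates the Haar-orthogonal average (right-hand
side): for `d_i ≥ 1`,
`2/(m+1) + S₁/(4m(m+1)) + S₂/(4m(m+1)) ≥ 3/(m+2) + S₁/(2m(m+2))`. -/
theorem unitary_average_ge_orthogonal_average (m : ℕ) (hm : 1 ≤ m)
    (d : Fin m → ℝ) (hd : ∀ i, 1 ≤ d i) :
    3 / ((m : ℝ) + 2) + S1 d / (2 * m * (m + 2)) ≤
      2 / ((m : ℝ) + 1) + S1 d / (4 * m * (m + 1)) + S2 d / (4 * m * (m + 1)) :=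
  unitary_average_ge_orthogonal_average_general m d hd
end
end
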